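/- Let C be a Cauchy complete category and let (C, D) be a display map category which models Σ-types and Id-types. Then (C, D̄) is a display map category which models Σ-types; in particular the class D̄ = (^⧄D)^⧄ is closed under composition. -/
import Mathlib


open CategoryTheory Limits

universe v u

namespace DMCPaper

variable {C : Type u} [Category.{v} C]

/-- The class of morphisms with the left lifting property against every morphism of `M`. -/
def Llp (M : MorphismProperty C) : MorphismProperty C :=
  fun _ _ f => ∀ ⦃U V : C⦄ (g : U ⟶ V), M g → HasLiftingProperty f g

/-- The class of morphisms with the right lifting property against every morphism of `M`. -/
def Rlp (M : MorphismProperty C) : MorphismProperty C :=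
  fun _ _ f => ∀ ⦃U V : C⦄ (g : U ⟶ V), M g → HasLiftingProperty g f

/-- `D̄ = (^⧄D)^⧄`. -/
def Bar (D : MorphismProperty C) : MorphismProperty C := Rlp (Llp D)

/-- `(C, D)` is a display map category. -/
structure IsDisplayMapCategory (D : MorphismProperty C) : Prop where
  hasTerminal : HasTerminal C
  mem_of_isIso : ∀ ⦃X Y : C⦄ (f : X ⟶ Y), IsIso f → D f
  mem_of_isTerminal : ∀ ⦃X Y : C⦄ (f : X ⟶ Y), IsTerminal Y → D f
  hasPullback : ∀ ⦃X Y A : C⦄ (d : X ⟶ Y) (α : A ⟶ Y), D d → HasPullback α d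
  stable : ∀ ⦃P A X Y : C⦄ (h : P ⟶ A) (k : P ⟶ X) (α : A ⟶ Y) (d : X ⟶ Y),
      IsPullback h k α d → D d → D h

/-- `(C, D)` models `Σ`-types: `D` is closed under composition. -/
def ModelsSigma (D : MorphismProperty C) : Prop :=
  ∀ ⦃X Y Z : C⦄ (f : X ⟶ Y) (g : Y ⟶ Z), D f → D g → D (f ≫ g)

/-- `(C, D)` models (Paulin-Mohring) `Id`-types. -/
def ModelsId (D : MorphismProperty C) : Prop :=
  ∀ ⦃X Y : C⦄ (f : X ⟶ Y), D f →
    ∃ (P : C) (π₀ π₁ : P ⟶ X) (hP : IsPullback π₀ π₁ f f)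
      (I : C) (r : X ⟶ I) (ε : I ⟶ P),
      r ≫ ε = hP.lift (𝟙 X) (𝟙 X) rfl ∧ D ε ∧
      ∀ (π : P ⟶ X), (π = π₀ ∨ π = π₁) →
        ∀ ⦃A : C⦄ (α : A ⟶ X) ⦃Q : C⦄ (p : Q ⟶ A) (q : Q ⟶ I),
          IsPullback p q α (ε ≫ π) →
          ∀ (l : A ⟶ Q), l ≫ p = 𝟙 A → l ≫ q = α ≫ r → Llp D l

/-- Functorial `Id`-type structure on a display map category. -/
structure FunctorialIdData (D : MorphismProperty C) where
  P : ∀ ⦃X Y : C⦄ (f : X ⟶ Y), D f → C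
  π₀ : ∀ ⦃X Y : C⦄ (f : X ⟶ Y) (hf : D f), P f hf ⟶ X
  π₁ : ∀ ⦃X Y : C⦄ (f : X ⟶ Y) (hf : D f), P f hf ⟶ X
  isPullback : ∀ ⦃X Y : C⦄ (f : X ⟶ Y) (hf : D f), IsPullback (π₀ f hf) (π₁ f hf) f f
  I : ∀ ⦃X Y : C⦄ (f : X ⟶ Y), D f → C
  r : ∀ ⦃X Y : C⦄ (f : X ⟶ Y) (hf : D f), X ⟶ I f hf
  ε : ∀ ⦃X Y : C⦄ (f : X ⟶ Y) (hf : D f), I f hf ⟶ P f hf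
  fact : ∀ ⦃X Y : C⦄ (f : X ⟶ Y) (hf : D f),
    r f hf ≫ ε f hf = (isPullback f hf).lift (𝟙 X) (𝟙 X) rfl
  ε_mem : ∀ ⦃X Y : C⦄ (f : X ⟶ Y) (hf : D f), D (ε f hf)
  lp : ∀ ⦃X Y : C⦄ (f : X ⟶ Y) (hf : D f) (π : P f hf ⟶ X),
    (π = π₀ f hf ∨ π = π₁ f hf) →
    ∀ ⦃A : C⦄ (α : A ⟶ X) ⦃Q : C⦄ (p : Q ⟶ A) (q : Q ⟶ I f hf),
      IsPullback p q α (ε f hf ≫ π) →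
      ∀ (l : A ⟶ Q), l ≫ p = 𝟙 A → l ≫ q = α ≫ r f hf → Llp D l
  map : ∀ ⦃Y X X' : C⦄ (f : X ⟶ Y) (f' : X' ⟶ Y) (hf : D f) (hf' : D f')
    (u : X ⟶ X'), u ≫ f' = f → (I f hf ⟶ I f' hf')
  map_r : ∀ ⦃Y X X' : C⦄ (f : X ⟶ Y) (f' : X' ⟶ Y) (hf : D f) (hf' : D f')
    (u : X ⟶ X') (hu : u ≫ f' = f),
    r f hf ≫ map f f' hf hf' u hu = u ≫ r f' hf'
  map_ε : ∀ ⦃Y X X' : C⦄ (f : X ⟶ Y) (f' : X' ⟶ Y) (hf : D f) (hf' : D f')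
    (u : X ⟶ X') (hu : u ≫ f' = f),
    map f f' hf hf' u hu ≫ ε f' hf' =
      ε f hf ≫ (isPullback f' hf').lift (π₀ f hf ≫ u) (π₁ f hf ≫ u)
        (by rw [Category.assoc, Category.assoc, hu]; exact (isPullback f hf).w)
  map_id : ∀ ⦃X Y : C⦄ (f : X ⟶ Y) (hf : D f),
    map f f hf hf (𝟙 X) (Category.id_comp f) = 𝟙 (I f hf)
  map_comp : ∀ ⦃Y X X' X'' : C⦄ (f : X ⟶ Y) (f' : X' ⟶ Y) (f'' : X'' ⟶ Y)
    (hf : D f) (hf' : D f') (hf'' : D f'')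
    (u : X ⟶ X') (hu : u ≫ f' = f) (v : X' ⟶ X'') (hv : v ≫ f'' = f'),
    map f f'' hf hf'' (u ≫ v) (by rw [Category.assoc, hv, hu]) =
      map f f' hf hf' u hu ≫ map f' f'' hf' hf'' v hv

/-- `(C, D)` models functorial `Id`-types. -/
def ModelsFunctorialId (D : MorphismProperty C) : Prop :=
  Nonempty (FunctorialIdData D)

/-- `(C, D)` models `Π`-types. -/
def ModelsPi (D : MorphismProperty C) : Prop :=
  ∀ ⦃W X Y : C⦄ (g : W ⟶ X) (f : X ⟶ Y), D g → D f →
    ∃ (PI : C) (pf : PI ⟶ Y), D pf ∧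
      ∃ φ : ∀ ⦃A Q : C⦄ (y : A ⟶ Y) (a : Q ⟶ A) (q : Q ⟶ X),
          IsPullback a q y f →
          ({u : A ⟶ PI // u ≫ pf = y} ≃ {v : Q ⟶ W // v ≫ g = q}),
        ∀ ⦃A A' Q Q' : C⦄ (y : A ⟶ Y) (y' : A' ⟶ Y) (t : A ⟶ A') (ht : t ≫ y' = y)
          (a : Q ⟶ A) (q : Q ⟶ X) (hQ : IsPullback a q y f)
          (a' : Q' ⟶ A') (q' : Q' ⟶ X) (hQ' : IsPullback a' q' y' f)
          (s : Q ⟶ Q'), s ≫ a' = a ≫ t → s ≫ q' = q →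
          ∀ (u' : A' ⟶ PI) (hu' : u' ≫ pf = y'),
            (φ y a q hQ ⟨t ≫ u', by rw [Category.assoc, hu', ht]⟩).1 =
              s ≫ (φ y' a' q' hQ' ⟨u', hu'⟩).1

/-- `(L, R)` is a weak factorization system on `C`. -/
def IsWFS (L R : MorphismProperty C) : Prop :=
  (∀ ⦃X Y : C⦄ (f : X ⟶ Y), ∃ (Z : C) (l : X ⟶ Z) (ρ : Z ⟶ Y), L l ∧ R ρ ∧ l ≫ ρ = f)
  ∧ L = Llp R ∧ R = Rlp L

/-- `f` is a retract of `g` in the arrow category `C^2`. -/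
def IsRetractOf {X Y U V : C} (f : X ⟶ Y) (g : U ⟶ V) : Prop :=
  ∃ (iX : X ⟶ U) (iY : Y ⟶ V) (rX : U ⟶ X) (rY : V ⟶ Y),
    iX ≫ g = f ≫ iY ∧ rX ≫ f = g ≫ rY ∧ iX ≫ rX = 𝟙 X ∧ iY ≫ rY = 𝟙 Y

/-- `(C, D)` models the formation and introduction rules of `Id`-types. -/
def ModelsFormIntro (D : MorphismProperty C) : Prop :=
  ∀ ⦃A Γ : C⦄ (d : A ⟶ Γ), D d →
    ∃ (P : C) (π₀ π₁ : P ⟶ A) (hP : IsPullback π₀ π₁ d d)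
      (I : C) (r : A ⟶ I) (ε : I ⟶ P),
      r ≫ ε = hP.lift (𝟙 A) (𝟙 A) rfl ∧ D ε

/-- `(C, D)` models Paulin-Mohring `Id`-types. -/
def ModelsPaulinMohringId (D : MorphismProperty C) : Prop :=
  ∀ ⦃A Γ : C⦄ (d : A ⟶ Γ), D d →
    ∃ (P : C) (π₀ π₁ : P ⟶ A) (hP : IsPullback π₀ π₁ d d)
      (I : C) (r : A ⟶ I) (ε : I ⟶ P),
      r ≫ ε = hP.lift (𝟙 A) (𝟙 A) rfl ∧ D ε ∧
      ∀ (π : P ⟶ A), (π = π₀ ∨ π = π₁) →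
        ∀ ⦃Δ : C⦄ (σ : Δ ⟶ A) ⦃Q : C⦄ (p : Q ⟶ Δ) (q : Q ⟶ I),
          IsPullback p q σ (ε ≫ π) →
          ∀ (l : Δ ⟶ Q), l ≫ p = 𝟙 Δ → l ≫ q = σ ≫ r → Llp D l

/-- `(C, D)` models parametrized Martin-Löf `Id`-types (which includes the
plain Martin-Löf elimination). -/
def ModelsParamMLId (D : MorphismProperty C) : Prop :=
  ∀ ⦃A Γ : C⦄ (d : A ⟶ Γ), D d →
    ∃ (P : C) (π₀ π₁ : P ⟶ A) (hP : IsPullback π₀ π₁ d d)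
      (I : C) (r : A ⟶ I) (ε : I ⟶ P),
      r ≫ ε = hP.lift (𝟙 A) (𝟙 A) rfl ∧ D ε ∧
      ∀ ⦃Δ : C⦄ (σ : Δ ⟶ Γ)
        ⦃A₀ : C⦄ (pA : A₀ ⟶ Δ) (qA : A₀ ⟶ A), IsPullback pA qA σ d →
        ∀ ⦃Q : C⦄ (pI : Q ⟶ Δ) (qI : Q ⟶ I), IsPullback pI qI σ (ε ≫ π₀ ≫ d) →
        ∀ (m : A₀ ⟶ Q), m ≫ pI = pA → m ≫ qI = qA ≫ r →
          Llp D m ∧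
          ∀ ⦃Θ : C⦄ (θ : Θ ⟶ Q), D θ →
            ∀ ⦃E : C⦄ (e₁ : E ⟶ Θ) (e₂ : E ⟶ A₀), IsPullback e₁ e₂ θ m → Llp D e₁

/-- `^⧄D` is stable under pullback along morphisms of `D`. -/
def LlpStableUnderPullbackAlongD (D : MorphismProperty C) : Prop :=
  ∀ ⦃P A X Y : C⦄ (h : P ⟶ A) (k : P ⟶ X) (d : A ⟶ Y) (l : X ⟶ Y),
    IsPullback h k d l → D d → Llp D l → Llp D h



section Statement12Aux

variable {D : MorphismProperty C}

theorem bar_of_mem {X Y : C} {f : X ⟶ Y} (hf : D f) : Bar D f :=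
  fun _ _ g hg => hg f hf

theorem bar_of_isIso {X Y : C} (f : X ⟶ Y) (hf : IsIso f) : Bar D f := by
  intro U V _g _
  infer_instance

theorem bar_comp {X Y Z : C} {f : X ⟶ Y} {g : Y ⟶ Z} (hf : Bar D f) (hg : Bar D g) :
    Bar D (f ≫ g) := by
  intro U V i hi
  haveI := hf i hi
  haveI := hg i hi
  infer_instance

theorem bar_pullback {P A X Y : C} {h : P ⟶ A} {k : P ⟶ X} {α : A ⟶ Y} {d : X ⟶ Y}
    (hP : IsPullback h k α d) (hd : Bar D d) : Bar D h := by
  intro U V i hi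
  haveI : HasLiftingProperty i d := hd i hi
  constructor
  intro u v sq
  have sq2 : CommSq (u ≫ k) i d (v ≫ α) :=
    ⟨by rw [Category.assoc, ← hP.w, ← Category.assoc, sq.w, Category.assoc]⟩
  haveI := HasLiftingProperty.sq_hasLift sq2
  refine ⟨⟨⟨hP.lift v sq2.lift sq2.fac_right.symm, ?_, hP.lift_fst _ _ _⟩⟩⟩
  apply hP.hom_ext
  · rw [Category.assoc, hP.lift_fst, ← sq.w]
  · rw [Category.assoc, hP.lift_snd, sq2.fac_left]

/-- Constructing an `IsPullback` from an explicit universal property. -/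
theorem isPullback_of_universal {Pt X Y Z : C} (fst : Pt ⟶ X) (snd : Pt ⟶ Y)
    (f : X ⟶ Z) (g : Y ⟶ Z) (w : fst ≫ f = snd ≫ g)
    (lift : ∀ {T : C} (u : T ⟶ X) (v : T ⟶ Y), u ≫ f = v ≫ g → (T ⟶ Pt))
    (hfst : ∀ {T : C} (u : T ⟶ X) (v : T ⟶ Y) (hw : u ≫ f = v ≫ g), lift u v hw ≫ fst = u)
    (hsnd : ∀ {T : C} (u : T ⟶ X) (v : T ⟶ Y) (hw : u ≫ f = v ≫ g), lift u v hw ≫ snd = v)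
    (huniq : ∀ {T : C} (a b : T ⟶ Pt), a ≫ fst = b ≫ fst → a ≫ snd = b ≫ snd → a = b) :
    IsPullback fst snd f g :=
  IsPullback.of_isLimit (PullbackCone.IsLimit.mk w
    (fun s => lift s.fst s.snd s.condition)
    (fun s => hfst s.fst s.snd s.condition)
    (fun s => hsnd s.fst s.snd s.condition)
    (fun s m h1 h2 => huniq m (lift s.fst s.snd s.condition)
      (by rw [h1, hfst s.fst s.snd s.condition])
      (by rw [h2, hsnd s.fst s.snd s.condition])))

/-- Factorization: every morphism factors as a `Llp D` map followed by a `D` map. -/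
theorem exists_fact (hDMC : IsDisplayMapCategory D) (hSigma : ModelsSigma D)
    (hId : ModelsId D) {X Y : C} (f : X ⟶ Y) :
    ∃ (Z : C) (l : X ⟶ Z) (ρ : Z ⟶ Y), Llp D l ∧ D ρ ∧ l ≫ ρ = f := by
  haveI := hDMC.hasTerminal
  set tX : X ⟶ ⊤_ C := terminal.from X with htX
  set tY : Y ⟶ ⊤_ C := terminal.from Y with htY
  have hdX : D tX := hDMC.mem_of_isTerminal _ terminalIsTerminal
  have hdY : D tY := hDMC.mem_of_isTerminal _ terminalIsTerminal
  obtain ⟨P, π₀, π₁, hP, I, r, ε, hre, hε, hlp⟩ := hId tY hdY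
  haveI := hDMC.hasPullback tX tY hdX
  set pY : pullback tY tX ⟶ Y := pullback.fst tY tX with hpY'
  set pX : pullback tY tX ⟶ X := pullback.snd tY tX with hpX'
  have hXYpb : IsPullback pY pX tY tX := IsPullback.of_hasPullback tY tX
  have hpY : D pY := hDMC.stable pY pX tY tX hXYpb hdX
  set g : pullback tY tX ⟶ P := hP.lift (pX ≫ f) pY (Subsingleton.elim _ _) with hg'
  have e1 : g ≫ π₀ = pX ≫ f := hP.lift_fst _ _ _
  have e2 : g ≫ π₁ = pY := hP.lift_snd _ _ _
  have e3 : r ≫ ε ≫ π₀ = 𝟙 Y := by rw [← Category.assoc, hre, hP.lift_fst]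
  have e4 : r ≫ ε ≫ π₁ = 𝟙 Y := by rw [← Category.assoc, hre, hP.lift_snd]
  haveI := hDMC.hasPullback ε g hε
  set q1 : pullback g ε ⟶ pullback tY tX := pullback.fst g ε with hq1'
  set q2 : pullback g ε ⟶ I := pullback.snd g ε with hq2'
  have hPfpb : IsPullback q1 q2 g ε := IsPullback.of_hasPullback g ε
  have hq1 : D q1 := hDMC.stable q1 q2 g ε hPfpb hε
  have hρ : D (q1 ≫ pY) := hSigma q1 pY hq1 hpY
  set m : X ⟶ pullback tY tX := pullback.lift f (𝟙 X) (Subsingleton.elim _ _) with hm'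
  have hmY : m ≫ pY = f := pullback.lift_fst _ _ _
  have hmX : m ≫ pX = 𝟙 X := pullback.lift_snd _ _ _
  have hmg : m ≫ g = (f ≫ r) ≫ ε := by
    apply hP.hom_ext
    · rw [Category.assoc, e1, ← Category.assoc, hmX, Category.id_comp,
        Category.assoc, Category.assoc, e3, Category.comp_id]
    · rw [Category.assoc, e2, hmY, Category.assoc, Category.assoc, e4, Category.comp_id]
  set l : X ⟶ pullback g ε := pullback.lift m (f ≫ r) hmg with hl'
  have hl1 : l ≫ q1 = m := pullback.lift_fst _ _ _
  have hl2 : l ≫ q2 = f ≫ r := pullback.lift_snd _ _ _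
  refine ⟨pullback g ε, l, q1 ≫ pY, ?_, hρ, by
    rw [← Category.assoc, hl1, hmY]⟩
  -- the middle square : pullback tY tX is the pullback of π₀ along f
  have sq2 : IsPullback pX g f π₀ := by
    refine isPullback_of_universal pX g f π₀ (by rw [e1]) ?_ ?_ ?_ ?_
    · exact fun {T} u w hw => hXYpb.lift (w ≫ π₁) u (Subsingleton.elim _ _)
    · exact fun {T} u w hw => hXYpb.lift_snd _ _ _
    · intro T u w hw
      apply hP.hom_ext
      · rw [Category.assoc, e1, ← Category.assoc, hXYpb.lift_snd, hw]
      · rw [Category.assoc, e2, hXYpb.lift_fst]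
    · intro T a b h1 h2
      apply hXYpb.hom_ext
      · have := congrArg (fun t => t ≫ π₁) h2
        simpa only [Category.assoc, e2] using this
      · exact h1
  have bigpb : IsPullback (q1 ≫ pX) q2 f (ε ≫ π₀) := hPfpb.paste_horiz sq2
  refine hlp π₀ (Or.inl rfl) f (q1 ≫ pX) q2 bigpb l ?_ hl2
  rw [← Category.assoc, hl1, hmX]

/-- A pullback of a retract of `ρ` exists, provided pullbacks of `ρ` exist and
idempotents split. -/
theorem hasPullback_of_retract (hC : IsIdempotentComplete C)
    {X Y Z A : C} {d : X ⟶ Y} {l : X ⟶ Z} {ρ : Z ⟶ Y} {s : Z ⟶ X}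
    (hlρ : l ≫ ρ = d) (hls : l ≫ s = 𝟙 X) (hsd : s ≫ d = ρ)
    (α : A ⟶ Y) [HasPullback α ρ] : HasPullback α d := by
  have hw : pullback.fst α ρ ≫ α = pullback.snd α ρ ≫ ρ := pullback.condition
  have hcond : pullback.fst α ρ ≫ α = (pullback.snd α ρ ≫ s ≫ l) ≫ ρ := by
    rw [Category.assoc, Category.assoc, hlρ, hsd, hw]
  set e : pullback α ρ ⟶ pullback α ρ :=
    pullback.lift (pullback.fst α ρ) (pullback.snd α ρ ≫ s ≫ l) hcond with he'
  have he1 : e ≫ pullback.fst α ρ = pullback.fst α ρ := pullback.lift_fst _ _ _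
  have he2 : e ≫ pullback.snd α ρ = pullback.snd α ρ ≫ s ≫ l := pullback.lift_snd _ _ _
  have hsl2 : s ≫ l ≫ s ≫ l = s ≫ l := by
    rw [← Category.assoc l s l, hls, Category.id_comp]
  have hee : e ≫ e = e := by
    apply pullback.hom_ext
    · rw [Category.assoc, he1, he1]
    · rw [Category.assoc, he2, ← Category.assoc e (pullback.snd α ρ), he2]
      simp only [Category.assoc]
      rw [hsl2]
  obtain ⟨V, i, rr, hir, hri⟩ := hC.idempotents_split _ e hee
  have hie : i ≫ e = i := by rw [← hri, ← Category.assoc, hir, Category.id_comp]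
  have key : i ≫ pullback.snd α ρ ≫ s ≫ l = i ≫ pullback.snd α ρ := by
    rw [← he2, ← Category.assoc, hie]
  have hews : e ≫ pullback.snd α ρ ≫ s = pullback.snd α ρ ≫ s := by
    rw [← Category.assoc, he2, Category.assoc, Category.assoc, hls, Category.comp_id]
  have fac1 : ∀ {T : C} (pl : T ⟶ pullback α ρ),
      (pl ≫ rr) ≫ i ≫ pullback.fst α ρ = pl ≫ pullback.fst α ρ := by
    intro T pl
    rw [Category.assoc, ← Category.assoc rr i, hri, he1]
  have fac2 : ∀ {T : C} (pl : T ⟶ pullback α ρ),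
      (pl ≫ rr) ≫ i ≫ pullback.snd α ρ ≫ s = pl ≫ pullback.snd α ρ ≫ s := by
    intro T pl
    rw [Category.assoc, ← Category.assoc rr i, hri, hews]
  have wab : (i ≫ pullback.fst α ρ) ≫ α = (i ≫ pullback.snd α ρ ≫ s) ≫ d := by
    simp only [Category.assoc]
    rw [hsd, hw]
  have hPB : IsPullback (i ≫ pullback.fst α ρ) (i ≫ pullback.snd α ρ ≫ s) α d := by
    refine isPullback_of_universal _ _ α d wab
      (fun {T} u v hw' => pullback.lift u (v ≫ l)
        (by rw [Category.assoc, hlρ, hw']) ≫ rr) ?_ ?_ ?_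
    · intro T u v hw'
      rw [fac1, pullback.lift_fst]
    · intro T u v hw'
      rw [fac2, ← Category.assoc, pullback.lift_snd, Category.assoc, hls, Category.comp_id]
    · intro T a b h1 h2
      have hi : a ≫ i = b ≫ i := by
        apply pullback.hom_ext
        · simpa only [Category.assoc] using h1
        · have ha := congrArg (fun t => t ≫ l) h2
          simp only [Category.assoc] at ha
          rw [key] at ha
          simpa only [Category.assoc] using ha
      calc a = a ≫ i ≫ rr := by rw [hir, Category.comp_id]
        _ = b ≫ i ≫ rr := by rw [← Category.assoc, hi, Category.assoc]
        _ = b := by rw [hir, Category.comp_id]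
  exact ⟨⟨⟨_, hPB.isLimit⟩⟩⟩

end Statement12Aux

/-- if `C` is Cauchy complete and `(C, D)` models `Σ`- and `Id`-types,
then `(C, D̄)` is a display map category modeling `Σ`-types; in particular `D̄` is
closed under composition. -/
theorem statement_12 (hC : IsIdempotentComplete C) (D : MorphismProperty C)
    (hDMC : IsDisplayMapCategory D) (hSigma : ModelsSigma D) (hId : ModelsId D) :
    IsDisplayMapCategory (Bar D) ∧ ModelsSigma (Bar D) := by
  have hfact := fun {X Y : C} (f : X ⟶ Y) => exists_fact hDMC hSigma hId f
  refine ⟨⟨hDMC.hasTerminal, ?_, ?_, ?_, ?_⟩, ?_⟩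
  · exact fun X Y f hf => bar_of_isIso f hf
  · exact fun X Y f hY => bar_of_mem (hDMC.mem_of_isTerminal f hY)
  · intro X Y A d α hd
    obtain ⟨Z, l, ρ, hl, hρ, hlρ⟩ := hfact d
    haveI : HasLiftingProperty l d := hd l hl
    have sq : CommSq (𝟙 X) l d ρ := ⟨by rw [Category.id_comp, hlρ]⟩
    haveI := HasLiftingProperty.sq_hasLift sq
    haveI := hDMC.hasPullback ρ α hρ
    exact hasPullback_of_retract hC hlρ sq.fac_left sq.fac_right α
  · exact fun P A X Y h k α d hpb hd => bar_pullback hpb hd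
  · exact fun X Y Z f g hf hg => bar_comp hf hg


end DMCPaper
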